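/- Let M be a finite J-trivial monoid and E(M) its set of idempotents. For idempotents e, f ∈ E(M), define e ⋆ f := (e·f)^ω. Then for all e, f ∈ E(M): e ⋆ f ≤_J e, e ⋆ f ≤_J f, and every idempotent z with z ≤_J e and z ≤_J f satisfies z ≤_J e ⋆ f; consequently E(M), partially ordered by the restriction of ≤_J, is a lattice in which the meet of e and f is e ⋆ f, and (E(M), ⋆) is a commutative monoid with identity 1 in which every element is idempotent. -/

import Mathlib

/-- The `J`-preorder on a monoid: `x ≤_J y` iff `x = u * y * v` for some `u, v`. -/
def leJ {M : Type*} [Monoid M] (x y : M) : Prop := ∃ u v : M, x = u * y * v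

/-- A monoid is `J`-trivial if `M x M = M y M` implies `x = y`. -/
def JTrivial (M : Type*) [Monoid M] : Prop :=
  ∀ x y : M, {z : M | ∃ u v : M, z = u * x * v} = {z : M | ∃ u v : M, z = u * y * v} → x = y

open Classical

/-- `x ^ ω`: the unique idempotent among the positive powers of `x`
(in a finite `J`-trivial monoid it exists and is unique). -/
noncomputable def omegaPow {M : Type*} [Monoid M] (x : M) : M :=
  if h : ∃ e : M, IsIdempotentElem e ∧ ∃ n : ℕ, 0 < n ∧ e = x ^ n then h.choose else 1


/-
The positive powers of `x` form a finite subsemigroup, so they contain an idempotent `x ^ ω`.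
`J`-triviality forces an idempotent `z` with `z ≤_J e` to be absorbed on the left by `e`: from
`z = a * (e * b)` one gets `e * b * z ≤_J z ≤_J e * b * z`. Hence if `z ≤_J e` and `z ≤_J f`
then `(e * f) ^ n * z = z` for all `n`, so `z ≤_J (e * f) ^ ω`; conversely `(e * f) ^ ω` is a
product starting with `e` and ending with `f`. Thus `(e * f) ^ ω` is the meet of `e` and `f`
among idempotents, and commutativity and associativity of `⋆` follow from the uniqueness of
meets in the partial order `≤_J`. Joins are meets of the finitely many idempotent upper bounds,
the empty meet being `1`.
-/

section LeJ

variable {M : Type*} [Monoid M]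

theorem leJ_refl (x : M) : leJ x x := ⟨1, 1, by simp⟩

theorem leJ_trans {x y z : M} (hxy : leJ x y) (hyz : leJ y z) : leJ x z := by
  obtain ⟨u, v, rfl⟩ := hxy
  obtain ⟨a, b, rfl⟩ := hyz
  exact ⟨u * a, b * v, by simp only [mul_assoc]⟩

theorem leJ_one (x : M) : leJ x 1 := ⟨x, 1, by simp⟩

theorem JTrivial.leJ_antisymm (hJ : JTrivial M) {x y : M} (hxy : leJ x y) (hyx : leJ y x) :
    x = y :=
  hJ x y <| Set.ext fun _ => ⟨fun hz => leJ_trans hz hxy, fun hz => leJ_trans hz hyx⟩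

theorem JTrivial.eq_of_forall_leJ_iff (hJ : JTrivial M) {x y : M} (hx : IsIdempotentElem x)
    (hy : IsIdempotentElem y)
    (h : ∀ z, IsIdempotentElem z → (leJ z x ↔ leJ z y)) : x = y :=
  hJ.leJ_antisymm ((h x hx).1 (leJ_refl x)) ((h y hy).2 (leJ_refl y))

theorem JTrivial.mul_eq_self_of_eq_mul (hJ : JTrivial M) {x y z : M} (hz : IsIdempotentElem z)
    (h : z = x * y) : y * z = z :=
  hJ.leJ_antisymm ⟨y, 1, by simp⟩ ⟨x, 1, by rw [mul_one, ← mul_assoc, ← h, hz]⟩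

theorem JTrivial.mul_eq_self_of_leJ (hJ : JTrivial M) {z e : M} (hz : IsIdempotentElem z)
    (he : IsIdempotentElem e) (hze : leJ z e) : e * z = z := by
  obtain ⟨a, b, hab⟩ := hze
  have hb : e * b * z = z := hJ.mul_eq_self_of_eq_mul hz (by rw [hab, mul_assoc])
  calc e * z = e * (e * b * z) := by rw [hb]
    _ = e * e * b * z := by simp only [mul_assoc]
    _ = z := by rw [he, hb]

end LeJ

section OmegaPow

variable {M : Type*} [Monoid M] [Finite M]

theorem exists_isIdempotentElem_pow (x : M) : ∃ n, 0 < n ∧ IsIdempotentElem (x ^ n) := by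
  let _ : TopologicalSpace M := ⊥
  have : DiscreteTopology M := ⟨rfl⟩
  -- Ellis–Numakura lemma, applied to the subsemigroup of positive powers of `x`
  obtain ⟨_, ⟨n, rfl⟩, hidem⟩ := exists_idempotent_in_compact_subsemigroup
    (fun _ => continuous_of_discreteTopology) (Set.range fun n : ℕ => x ^ (n + 1))
    (Set.range_nonempty _) (Set.toFinite _).isCompact
    (by rintro _ ⟨a, rfl⟩ _ ⟨b, rfl⟩; exact ⟨a + b + 1, by rw [← pow_add]; ring_nf⟩)
  exact ⟨n + 1, n.succ_pos, hidem⟩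

theorem isIdempotentElem_omegaPow_and_exists_pow (x : M) :
    IsIdempotentElem (omegaPow x) ∧ ∃ n, 0 < n ∧ omegaPow x = x ^ n := by
  obtain ⟨n, hn, hidem⟩ := exists_isIdempotentElem_pow x
  have h : ∃ e : M, IsIdempotentElem e ∧ ∃ n : ℕ, 0 < n ∧ e = x ^ n :=
    ⟨_, hidem, n, hn, rfl⟩
  rw [omegaPow, dif_pos h]
  exact h.choose_spec

theorem isIdempotentElem_omegaPow (x : M) : IsIdempotentElem (omegaPow x) :=
  (isIdempotentElem_omegaPow_and_exists_pow x).1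

theorem exists_omegaPow_eq_pow (x : M) : ∃ n, 0 < n ∧ omegaPow x = x ^ n :=
  (isIdempotentElem_omegaPow_and_exists_pow x).2

theorem IsIdempotentElem.omegaPow_eq {e : M} (he : IsIdempotentElem e) : omegaPow e = e := by
  obtain ⟨n, hn, hpow⟩ := exists_omegaPow_eq_pow e
  rw [hpow, he.pow_eq hn.ne']

theorem leJ_omegaPow_mul_left (x y : M) : leJ (omegaPow (x * y)) x := by
  obtain ⟨n, hn, hpow⟩ := exists_omegaPow_eq_pow (x * y)
  obtain ⟨m, rfl⟩ := Nat.exists_eq_add_of_lt hn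
  exact ⟨1, y * (x * y) ^ m, by rw [hpow, zero_add, pow_succ', one_mul, mul_assoc]⟩

theorem leJ_omegaPow_mul_right (x y : M) : leJ (omegaPow (x * y)) y := by
  obtain ⟨n, hn, hpow⟩ := exists_omegaPow_eq_pow (x * y)
  obtain ⟨m, rfl⟩ := Nat.exists_eq_add_of_lt hn
  exact ⟨(x * y) ^ m * x, 1, by rw [hpow, zero_add, pow_succ, mul_one, mul_assoc]⟩

theorem leJ_omegaPow_of_mul_eq_self {x z : M} (h : x * z = z) : leJ z (omegaPow x) := by
  obtain ⟨n, -, hpow⟩ := exists_omegaPow_eq_pow x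
  have hfix : x ^ n * z = z := by
    rw [← mul_left_iterate_apply]
    exact Function.IsFixedPt.iterate h n
  exact ⟨1, z, by rw [hpow, one_mul, hfix]⟩

end OmegaPow

namespace JTrivial

variable {M : Type*} [Monoid M] [Finite M]

theorem leJ_omegaPow_mul_iff (hJ : JTrivial M) {e f z : M} (he : IsIdempotentElem e)
    (hf : IsIdempotentElem f) (hz : IsIdempotentElem z) :
    leJ z (omegaPow (e * f)) ↔ leJ z e ∧ leJ z f := by
  refine ⟨fun h => ⟨leJ_trans h (leJ_omegaPow_mul_left e f),
    leJ_trans h (leJ_omegaPow_mul_right e f)⟩, fun ⟨hze, hzf⟩ => ?_⟩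
  apply leJ_omegaPow_of_mul_eq_self
  rw [mul_assoc, hJ.mul_eq_self_of_leJ hz hf hzf, hJ.mul_eq_self_of_leJ hz he hze]

theorem omegaPow_mul_comm (hJ : JTrivial M) {e f : M} (he : IsIdempotentElem e)
    (hf : IsIdempotentElem f) : omegaPow (e * f) = omegaPow (f * e) :=
  hJ.eq_of_forall_leJ_iff (isIdempotentElem_omegaPow _) (isIdempotentElem_omegaPow _)
    fun _ hz => by rw [hJ.leJ_omegaPow_mul_iff he hf hz, hJ.leJ_omegaPow_mul_iff hf he hz, and_comm]

theorem omegaPow_mul_assoc (hJ : JTrivial M) {e f g : M} (he : IsIdempotentElem e)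
    (hf : IsIdempotentElem f) (hg : IsIdempotentElem g) :
    omegaPow (omegaPow (e * f) * g) = omegaPow (e * omegaPow (f * g)) :=
  hJ.eq_of_forall_leJ_iff (isIdempotentElem_omegaPow _) (isIdempotentElem_omegaPow _)
    fun _ hz => by
      rw [hJ.leJ_omegaPow_mul_iff (isIdempotentElem_omegaPow _) hg hz,
        hJ.leJ_omegaPow_mul_iff he (isIdempotentElem_omegaPow _) hz,
        hJ.leJ_omegaPow_mul_iff he hf hz, hJ.leJ_omegaPow_mul_iff hf hg hz, and_assoc]

theorem exists_glb_finset (hJ : JTrivial M) (S : Finset M)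
    (hS : ∀ s ∈ S, IsIdempotentElem s) :
    ∃ m, IsIdempotentElem m ∧
      ∀ z, IsIdempotentElem z → (leJ z m ↔ ∀ s ∈ S, leJ z s) := by
  classical
  induction S using Finset.induction_on with
  | empty => exact ⟨1, .one, fun z _ => by simp [leJ_one]⟩
  | insert a S _ ih =>
    rw [Finset.forall_mem_insert] at hS
    obtain ⟨m, hm, hglb⟩ := ih hS.2
    refine ⟨omegaPow (a * m), isIdempotentElem_omegaPow _, fun z hz => ?_⟩
    rw [hJ.leJ_omegaPow_mul_iff hS.1 hm hz, hglb z hz, Finset.forall_mem_insert]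

theorem exists_lub (hJ : JTrivial M) {e f : M} (he : IsIdempotentElem e)
    (hf : IsIdempotentElem f) :
    ∃ j, IsIdempotentElem j ∧ leJ e j ∧ leJ f j ∧
      ∀ z, IsIdempotentElem z → leJ e z → leJ f z → leJ j z := by
  let U := (Set.toFinite {z : M | IsIdempotentElem z ∧ leJ e z ∧ leJ f z}).toFinset
  have hU : ∀ z, z ∈ U ↔ IsIdempotentElem z ∧ leJ e z ∧ leJ f z :=
    fun _ => Set.Finite.mem_toFinset _
  obtain ⟨j, hj, hglb⟩ := hJ.exists_glb_finset U fun z hz => ((hU z).1 hz).1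
  refine ⟨j, hj, (hglb e he).2 fun z hz => ((hU z).1 hz).2.1,
    (hglb f hf).2 fun z hz => ((hU z).1 hz).2.2, fun z hz hez hfz => ?_⟩
  exact (hglb j hj).1 (leJ_refl j) z ((hU z).2 ⟨hz, hez, hfz⟩)

end JTrivial

/-- In a finite `J`-trivial monoid `M`, setting `e ⋆ f := (e * f) ^ ω` on the set of
idempotents: `e ⋆ f` is the meet of `e` and `f` for the restriction of `≤_J`, which makes
the idempotents a lattice (meets and joins exist), and `⋆` is a commutative, associative,
idempotent product with identity `1`. -/
theorem star_meet_lattice_commMonoid {M : Type*} [Monoid M] [Fintype M] (hJ : JTrivial M) :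
    -- e ⋆ f is the meet of e and f among idempotents, for ≤_J
    (∀ e f : M, IsIdempotentElem e → IsIdempotentElem f →
      IsIdempotentElem (omegaPow (e * f)) ∧
      leJ (omegaPow (e * f)) e ∧ leJ (omegaPow (e * f)) f ∧
      (∀ z : M, IsIdempotentElem z → leJ z e → leJ z f → leJ z (omegaPow (e * f)))) ∧
    -- binary joins of idempotents exist (so that the idempotents form a lattice)
    (∀ e f : M, IsIdempotentElem e → IsIdempotentElem f →
      ∃ j : M, IsIdempotentElem j ∧ leJ e j ∧ leJ f j ∧
        (∀ z : M, IsIdempotentElem z → leJ e z → leJ f z → leJ j z)) ∧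
    -- (E(M), ⋆) is a commutative idempotent monoid with identity 1
    (∀ e f : M, IsIdempotentElem e → IsIdempotentElem f →
      omegaPow (e * f) = omegaPow (f * e)) ∧
    (∀ e f g : M, IsIdempotentElem e → IsIdempotentElem f → IsIdempotentElem g →
      omegaPow (omegaPow (e * f) * g) = omegaPow (e * omegaPow (f * g))) ∧
    (∀ e : M, IsIdempotentElem e → omegaPow (e * 1) = e ∧ omegaPow (1 * e) = e) ∧
    (∀ e : M, IsIdempotentElem e → omegaPow (e * e) = e) := by
  refine ⟨fun e f he hf => ⟨isIdempotentElem_omegaPow _, leJ_omegaPow_mul_left e f,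
      leJ_omegaPow_mul_right e f, fun z hz hze hzf =>
        (hJ.leJ_omegaPow_mul_iff he hf hz).2 ⟨hze, hzf⟩⟩,
    fun _ _ => hJ.exists_lub, fun _ _ => hJ.omegaPow_mul_comm,
    fun _ _ _ => hJ.omegaPow_mul_assoc, fun e he => ?_, fun e he => ?_⟩
  · rw [mul_one, one_mul]
    exact ⟨he.omegaPow_eq, he.omegaPow_eq⟩
  · rw [he.eq, he.omegaPow_eq]
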